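/- For every integer k and all real a, ε, the matrix P·Z^(−2k) commutes with the Harper matrix at b = 2πk/N: (P·Z^(−2k)) · h(a, 2πk/N, ε) = h(a, 2πk/N, ε) · (P·Z^(−2k)). -/

import Mathlib

open Matrix Complex

/-- The primitive `N`-th root of unity `ω = exp(2πi/N)`. -/
noncomputable def omegaN (N : ℕ) : ℂ := Complex.exp (2 * (Real.pi : ℂ) * Complex.I / (N : ℂ))

/-- The clock matrix `Z` with `Z_{jk} = ω^j` if `j = k`, `0` otherwise. -/
noncomputable def clockZ (N : ℕ) : Matrix (Fin N) (Fin N) ℂ :=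
  Matrix.diagonal fun j => omegaN N ^ (j : ℕ)

/-- The shift matrix `X` with `X_{jk} = 1` if `j = k + 1 (mod N)`, `0` otherwise. -/
def shiftX (N : ℕ) : Matrix (Fin N) (Fin N) ℂ :=
  Matrix.of fun j k => if (j : ℕ) = ((k : ℕ) + 1) % N then 1 else 0

/-- The shifted Harper matrix
`h(a,b,ε) = (a/2)·e^{ib}·X + (a/2)·e^{−ib}·Xᴴ + (ε/2)·(Z + Zᴴ)`. -/
noncomputable def harper (N : ℕ) (a b ε : ℝ) : Matrix (Fin N) (Fin N) ℂ :=
  ((a : ℂ) / 2 * Complex.exp ((b : ℂ) * Complex.I)) • shiftX N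
  + ((a : ℂ) / 2 * Complex.exp (-(b : ℂ) * Complex.I)) • (shiftX N)ᴴ
  + ((ε : ℂ) / 2) • (clockZ N + (clockZ N)ᴴ)

/-- The parity matrix `P` with `P_{jk} = 1` if `j + k ≡ 0 (mod N)`, `0` otherwise. -/
def parityP (N : ℕ) : Matrix (Fin N) (Fin N) ℂ :=
  Matrix.of fun j k => if ((j : ℕ) + (k : ℕ)) % N = 0 then 1 else 0

/-- The discrete Fourier transform matrix `Q` with `Q_{jk} = ω^{jk}/√N`. -/
noncomputable def dftQ (N : ℕ) : Matrix (Fin N) (Fin N) ℂ :=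
  Matrix.of fun j k => omegaN N ^ ((j : ℕ) * (k : ℕ)) / (Real.sqrt N : ℂ)

/-!
Write `M = P·Z^m`. Since `P` reverses `ℤ/N` and `Z^m` is diagonal, `M` is an involution, and
conjugation by `M` exchanges `Z` with `Zᴴ` and sends `X` to `ω^m Xᴴ`. For `m = −2k` the phase
`ω^(−2k)` is exactly the ratio `e^(−ib)/e^(ib)` of the two hopping coefficients of `h(a,b,ε)`,
so both the hopping part and the potential part of `h` have the form `x + y` with `M x = y M`,
and an involution commutes with such a sum.
-/

theorem SemiconjBy.commute_add_of_mul_self_eq_one {R : Type*} [Semiring R] {a x y : R}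
    (ha : a * a = 1) (h : SemiconjBy a x y) : Commute a (x + y) := by
  have h' : SemiconjBy a y x :=
    calc a * y = a * (y * a) * a := by rw [mul_assoc, mul_assoc, ha, mul_one]
      _ = x * a := by rw [← h.eq, ← mul_assoc, ha, one_mul]
  have hxy := h.add_right h'
  rwa [add_comm y x] at hxy

theorem Matrix.diagonal_zpow {n K : Type*} [Fintype n] [DecidableEq n] [Field K] (d : n → K)
    (hd : ∀ i, d i ≠ 0) : ∀ m : ℤ, diagonal d ^ m = diagonal fun i => d i ^ m
  | (m : ℕ) => by simp only [zpow_natCast, diagonal_pow]; rfl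
  | .negSucc m => by
    rw [zpow_negSucc, diagonal_pow]
    refine inv_eq_left_inv ?_
    rw [diagonal_mul_diagonal, ← diagonal_one]
    congr 1
    funext i
    simp [zpow_negSucc, hd i]

theorem omegaN_isPrimitiveRoot {N : ℕ} (hN : N ≠ 0) : IsPrimitiveRoot (omegaN N) N :=
  Complex.isPrimitiveRoot_exp N hN

theorem exp_two_pi_mul_div_mul_I (N : ℕ) (k : ℤ) :
    exp (((2 * Real.pi * k / N : ℝ) : ℂ) * I) = omegaN N ^ k := by
  rw [omegaN, ← Complex.exp_int_mul]
  push_cast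
  ring_nf

theorem omegaN_ne_zero (N : ℕ) : omegaN N ≠ 0 :=
  exp_ne_zero _

theorem clockZ_zpow {N : ℕ} (m : ℤ) : clockZ N ^ m = diagonal fun j => (omegaN N ^ j.val) ^ m :=
  diagonal_zpow _ (fun _ => pow_ne_zero _ (omegaN_ne_zero N)) m

section

variable {N : ℕ} [NeZero N]

theorem omegaN_pow_val_add (j l : Fin N) :
    omegaN N ^ (j + l).val = omegaN N ^ j.val * omegaN N ^ l.val := by
  rw [Fin.val_add, ← pow_eq_pow_mod _ (omegaN_isPrimitiveRoot (NeZero.ne N)).pow_eq_one, pow_add]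

theorem omegaN_pow_val_one : omegaN N ^ (1 : Fin N).val = omegaN N := by
  rw [Fin.val_one', ← pow_eq_pow_mod _ (omegaN_isPrimitiveRoot (NeZero.ne N)).pow_eq_one, pow_one]

theorem omegaN_pow_val_neg (j : Fin N) : omegaN N ^ (-j).val = (omegaN N ^ j.val)⁻¹ :=
  eq_inv_of_mul_eq_one_left <| by
    rw [← omegaN_pow_val_add, neg_add_cancel, Fin.val_zero, pow_zero]

theorem star_omegaN : star (omegaN N) = (omegaN N)⁻¹ :=
  (Complex.inv_eq_conj ((omegaN_isPrimitiveRoot (NeZero.ne N)).norm'_eq_one (NeZero.ne N))).symm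

theorem parityP_apply (j l : Fin N) : parityP N j l = if l = -j then 1 else 0 := by
  rw [parityP, of_apply]
  exact if_congr (by rw [← Fin.val_add, Fin.val_eq_zero_iff, add_eq_zero_iff_eq_neg']) rfl rfl

theorem shiftX_apply (j l : Fin N) : shiftX N j l = if j = l + 1 then 1 else 0 := by
  rw [shiftX, of_apply]
  exact if_congr (by rw [Fin.ext_iff, Fin.val_add, Fin.val_one', Nat.add_mod_mod]) rfl rfl

theorem parityP_mul_apply (A : Matrix (Fin N) (Fin N) ℂ) (j l : Fin N) :
    (parityP N * A) j l = A (-j) l := by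
  simp [mul_apply, parityP_apply]

theorem mul_parityP_apply (A : Matrix (Fin N) (Fin N) ℂ) (j l : Fin N) :
    (A * parityP N) j l = A j (-l) := by
  simp [mul_apply, parityP_apply, ← neg_eq_iff_eq_neg]

theorem parityP_mul_self : parityP N * parityP N = 1 := by
  ext j l
  simp [parityP_mul_apply, parityP_apply, one_apply, eq_comm]

theorem parityP_mul_diagonal (d : Fin N → ℂ) :
    parityP N * diagonal d = diagonal (fun j => d (-j)) * parityP N := by
  ext j l
  by_cases h : l = -j <;> simp [diagonal_mul, parityP_apply, h]

theorem diagonal_mul_shiftX (d : Fin N → ℂ) :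
    diagonal d * shiftX N = shiftX N * diagonal (fun j => d (j + 1)) := by
  ext j l
  rw [diagonal_mul, mul_diagonal, shiftX_apply]
  split_ifs with h
  · rw [h, mul_comm]
  · simp

theorem parityP_mul_shiftX : parityP N * shiftX N = (shiftX N)ᴴ * parityP N := by
  ext j l
  have h : -j = l + 1 ↔ -l = j + 1 := by
    rw [neg_eq_iff_add_eq_zero, neg_eq_iff_add_eq_zero, add_left_comm]
  simp [parityP_mul_apply, mul_parityP_apply, shiftX_apply, h]

theorem clockZ_conjTranspose : (clockZ N)ᴴ = diagonal fun j => omegaN N ^ (-j).val := by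
  simp [clockZ, diagonal_conjTranspose, omegaN_pow_val_neg, star_omegaN]

theorem parityP_mul_clockZ : parityP N * clockZ N = (clockZ N)ᴴ * parityP N := by
  rw [clockZ_conjTranspose, clockZ, parityP_mul_diagonal]

theorem clockZ_zpow_mul_shiftX (m : ℤ) :
    clockZ N ^ m * shiftX N = omegaN N ^ m • (shiftX N * clockZ N ^ m) := by
  rw [clockZ_zpow, diagonal_mul_shiftX, ← Matrix.mul_smul, ← diagonal_smul]
  congr 2
  funext j
  rw [omegaN_pow_val_add, omegaN_pow_val_one, mul_zpow, Pi.smul_apply, smul_eq_mul, mul_comm]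

theorem parityP_mul_clockZ_zpow_mul_self (m : ℤ) :
    parityP N * clockZ N ^ m * (parityP N * clockZ N ^ m) = 1 := by
  rw [clockZ_zpow, ← mul_assoc, parityP_mul_diagonal, mul_assoc (diagonal _) (parityP N),
    parityP_mul_self, mul_one, diagonal_mul_diagonal, ← diagonal_one]
  congr 1
  funext j
  rw [omegaN_pow_val_neg, _root_.inv_zpow,
    inv_mul_cancel₀ (zpow_ne_zero _ (pow_ne_zero _ (omegaN_ne_zero N)))]

theorem semiconjBy_parityP_mul_clockZ_zpow_clockZ (m : ℤ) :
    SemiconjBy (parityP N * clockZ N ^ m) (clockZ N) (clockZ N)ᴴ :=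
  calc parityP N * clockZ N ^ m * clockZ N = parityP N * clockZ N * clockZ N ^ m := by
        rw [mul_assoc, (Matrix.Commute.zpow_self _ m).eq, ← mul_assoc]
    _ = (clockZ N)ᴴ * (parityP N * clockZ N ^ m) := by rw [parityP_mul_clockZ, mul_assoc]

theorem semiconjBy_parityP_mul_clockZ_zpow_shiftX (m : ℤ) :
    SemiconjBy (parityP N * clockZ N ^ m) (shiftX N) (omegaN N ^ m • (shiftX N)ᴴ) :=
  calc parityP N * clockZ N ^ m * shiftX N
        = omegaN N ^ m • (parityP N * shiftX N * clockZ N ^ m) := by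
        rw [mul_assoc, clockZ_zpow_mul_shiftX, Matrix.mul_smul, ← mul_assoc]
    _ = omegaN N ^ m • (shiftX N)ᴴ * (parityP N * clockZ N ^ m) := by
        rw [parityP_mul_shiftX, smul_mul, mul_assoc]

end

theorem harper_two_pi_mul_div (N : ℕ) (k : ℤ) (a ε : ℝ) :
    harper N a (2 * Real.pi * k / N) ε =
      ((a : ℂ) / 2 * omegaN N ^ k) • (shiftX N + omegaN N ^ (-(2 * k)) • (shiftX N)ᴴ)
        + ((ε : ℂ) / 2) • (clockZ N + (clockZ N)ᴴ) := by
  have hcoeff :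
      (a : ℂ) / 2 * (omegaN N ^ k)⁻¹ = (a / 2 * omegaN N ^ k) * omegaN N ^ (-(2 * k)) := by
    rw [mul_assoc, ← zpow_add₀ (omegaN_ne_zero N), ← _root_.zpow_neg]
    ring_nf
  rw [harper, neg_mul, Complex.exp_neg, exp_two_pi_mul_div_mul_I, hcoeff,
    smul_add ((a : ℂ) / 2 * omegaN N ^ k) (shiftX N), smul_smul]

theorem parity_clock_even_commutes_harper_general (N : ℕ) (k : ℤ) (a ε : ℝ) :
    (parityP N * (clockZ N) ^ (-(2 * k))) * harper N a (2 * Real.pi * (k : ℝ) / N) ε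
      = harper N a (2 * Real.pi * (k : ℝ) / N) ε * (parityP N * (clockZ N) ^ (-(2 * k))) := by
  obtain rfl | hN := eq_or_ne N 0
  · exact Subsingleton.elim _ _
  have : NeZero N := ⟨hN⟩
  have hM := parityP_mul_clockZ_zpow_mul_self (N := N) (-(2 * k))
  have hX := (semiconjBy_parityP_mul_clockZ_zpow_shiftX _).commute_add_of_mul_self_eq_one hM
  have hZ := (semiconjBy_parityP_mul_clockZ_zpow_clockZ _).commute_add_of_mul_self_eq_one hM
  rw [harper_two_pi_mul_div]
  exact ((hX.smul_right _).add_right (hZ.smul_right _)).eq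

/-- The matrix `P·Z^(−2k)` commutes with the Harper matrix at `b = 2πk/N`. -/
theorem parity_clock_even_commutes_harper (N : ℕ) (hN : 2 ≤ N) (k : ℤ) (a ε : ℝ) :
    (parityP N * (clockZ N) ^ (-(2 * k))) * harper N a (2 * Real.pi * (k : ℝ) / N) ε
      = harper N a (2 * Real.pi * (k : ℝ) / N) ε * (parityP N * (clockZ N) ^ (-(2 * k))) :=
  parity_clock_even_commutes_harper_general N k a ε
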